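/- Let G be a non-trivial connected graph. Then rvc(G) = 2 if and only if srvc(G) = 2. -/
import Mathlib


/- Definitions of the six rainbow connection parameters.

A colouring with (at most) `k` colours uses colours from `{0, ..., k-1}`.
Following the usual convention in the literature, only the colours appearing
on the edges / internal vertices of the witnessing paths are required to lie
in the palette; this yields e.g. `rvc(G) = 0` for complete graphs `G`. -/

namespace RainbowConn

variable {V : Type*}

/-- The internal vertices of a walk. -/
def internals {G : SimpleGraph V} {u v : V} (p : G.Walk u v) : List V :=
  p.support.tail.dropLast

/-- The rainbow connection number `rc G`: the minimum number of colours in an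
edge-colouring of `G` such that any two vertices are connected by a rainbow path. -/
noncomputable def rc (G : SimpleGraph V) : ℕ :=
  sInf {k | ∃ c : Sym2 V → ℕ, ∀ u v : V, ∃ p : G.Walk u v, p.IsPath ∧
    (p.edges.map c).Nodup ∧ ∀ e ∈ p.edges, c e < k}

/-- The strong rainbow connection number `src G`: the minimum number of colours in an
edge-colouring of `G` such that any two vertices are connected by a rainbow geodesic. -/
noncomputable def src (G : SimpleGraph V) : ℕ :=
  sInf {k | ∃ c : Sym2 V → ℕ, ∀ u v : V, ∃ p : G.Walk u v, p.IsPath ∧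
    p.length = G.dist u v ∧ (p.edges.map c).Nodup ∧ ∀ e ∈ p.edges, c e < k}

/-- The rainbow vertex-connection number `rvc G`: the minimum number of colours in a
vertex-colouring of `G` such that any two vertices are connected by a vertex-rainbow path. -/
noncomputable def rvc (G : SimpleGraph V) : ℕ :=
  sInf {k | ∃ c : V → ℕ, ∀ u v : V, ∃ p : G.Walk u v, p.IsPath ∧
    ((internals p).map c).Nodup ∧ ∀ x ∈ internals p, c x < k}

/-- The strong rainbow vertex-connection number `srvc G`: the minimum number of colours in a
vertex-colouring of `G` such that any two vertices are connected by a vertex-rainbow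
geodesic. -/
noncomputable def srvc (G : SimpleGraph V) : ℕ :=
  sInf {k | ∃ c : V → ℕ, ∀ u v : V, ∃ p : G.Walk u v, p.IsPath ∧
    p.length = G.dist u v ∧ ((internals p).map c).Nodup ∧ ∀ x ∈ internals p, c x < k}

/-- The total rainbow connection number `trc G`: the minimum number of colours in a
total-colouring of `G` such that any two vertices are connected by a total-rainbow path. -/
noncomputable def trc (G : SimpleGraph V) : ℕ :=
  sInf {k | ∃ (cE : Sym2 V → ℕ) (cV : V → ℕ), ∀ u v : V, ∃ p : G.Walk u v, p.IsPath ∧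
    (p.edges.map cE ++ (internals p).map cV).Nodup ∧
    (∀ e ∈ p.edges, cE e < k) ∧ ∀ x ∈ internals p, cV x < k}

/-- The strong total rainbow connection number `strc G`: the minimum number of colours in a
total-colouring of `G` such that any two vertices are connected by a total-rainbow
geodesic. -/
noncomputable def strc (G : SimpleGraph V) : ℕ :=
  sInf {k | ∃ (cE : Sym2 V → ℕ) (cV : V → ℕ), ∀ u v : V, ∃ p : G.Walk u v, p.IsPath ∧
    p.length = G.dist u v ∧ (p.edges.map cE ++ (internals p).map cV).Nodup ∧
    (∀ e ∈ p.edges, cE e < k) ∧ ∀ x ∈ internals p, cV x < k}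


open SimpleGraph



lemma internals_length {G : SimpleGraph V} {u v : V} (p : G.Walk u v) :
    (internals p).length = p.length - 1 := by
  simp [internals, List.length_dropLast, List.length_tail, Walk.length_support]

lemma nodup_of_short {α : Type*} {l : List α} (h : l.length ≤ 1) : l.Nodup := by
  rcases l with _ | ⟨a, _ | ⟨b, l⟩⟩ <;> simp_all

lemma length_le_of_nodup {l : List V} {c : V → ℕ} {k : ℕ}
    (hnd : (l.map c).Nodup) (hlt : ∀ x ∈ l, c x < k) : l.length ≤ k := by
  have hsub : (l.map c).toFinset ⊆ Finset.range k := by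
    intro x hx
    simp only [List.mem_toFinset, List.mem_map] at hx
    obtain ⟨y, hy, rfl⟩ := hx
    exact Finset.mem_range.mpr (hlt y hy)
  have := Finset.card_le_card hsub
  rwa [List.toFinset_card_of_nodup hnd, Finset.card_range, List.length_map] at this

lemma small_transfer {G : SimpleGraph V} (hconn : G.Connected) {k : ℕ} (hk : k ≤ 1)
    (h : ∃ c : V → ℕ, ∀ u v : V, ∃ p : G.Walk u v, p.IsPath ∧
      ((internals p).map c).Nodup ∧ ∀ x ∈ internals p, c x < k) :
    ∃ c : V → ℕ, ∀ u v : V, ∃ p : G.Walk u v, p.IsPath ∧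
      p.length = G.dist u v ∧ ((internals p).map c).Nodup ∧ ∀ x ∈ internals p, c x < k := by
  obtain ⟨c, hc⟩ := h
  refine ⟨fun _ => 0, fun u v => ?_⟩
  obtain ⟨p, hp, hnd, hlt⟩ := hc u v
  have hil : (internals p).length ≤ k := length_le_of_nodup hnd hlt
  have hpl : p.length ≤ k + 1 := by have := internals_length p; omega
  have hd : G.dist u v ≤ k + 1 := le_trans (SimpleGraph.dist_le p) hpl
  obtain ⟨q, hq, hql⟩ := hconn.exists_path_of_dist u v
  have hqi : (internals q).length ≤ k := by have := internals_length q; omega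
  refine ⟨q, hq, hql, nodup_of_short (by rw [List.length_map]; omega), fun x hx => ?_⟩
  show (0 : ℕ) < k
  have := List.length_pos_of_mem hx
  omega

lemma two_transfer {G : SimpleGraph V} (hconn : G.Connected)
    (h : ∃ c : V → ℕ, ∀ u v : V, ∃ p : G.Walk u v, p.IsPath ∧
      ((internals p).map c).Nodup ∧ ∀ x ∈ internals p, c x < 2) :
    ∃ c : V → ℕ, ∀ u v : V, ∃ p : G.Walk u v, p.IsPath ∧
      p.length = G.dist u v ∧ ((internals p).map c).Nodup ∧ ∀ x ∈ internals p, c x < 2 := by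
  obtain ⟨c, hc⟩ := h
  refine ⟨fun x => min (c x) 1, fun u v => ?_⟩
  obtain ⟨p, hp, hnd, hlt⟩ := hc u v
  have hil : (internals p).length ≤ 2 := length_le_of_nodup hnd hlt
  have hpl : p.length ≤ 3 := by have := internals_length p; omega
  by_cases hd : G.dist u v = p.length
  · refine ⟨p, hp, hd.symm, ?_, fun x hx => by show min (c x) 1 < 2; omega⟩
    have heq : ∀ x ∈ internals p, min (c x) 1 = c x := fun x hx => by
      have := hlt x hx; omega
    rw [List.map_congr_left heq]
    exact hnd
  · have hdlt : G.dist u v < p.length := lt_of_le_of_ne (SimpleGraph.dist_le p) hd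
    obtain ⟨q, hq, hql⟩ := hconn.exists_path_of_dist u v
    have hqi : (internals q).length ≤ 1 := by have := internals_length q; omega
    exact ⟨q, hq, hql, nodup_of_short (by rw [List.length_map]; omega),
      fun x hx => by show min (c x) 1 < 2; omega⟩

/-- For a non-trivial connected graph `G`, `rvc(G) = 2` if and only if `srvc(G) = 2`. -/
theorem rvc_eq_two_iff_srvc_eq_two {V : Type*} [Fintype V] (G : SimpleGraph V)
    (hconn : G.Connected) (hV : 2 ≤ Fintype.card V) :
    rvc G = 2 ↔ srvc G = 2 := by
  classical
  set SR := {k | ∃ c : V → ℕ, ∀ u v : V, ∃ p : G.Walk u v, p.IsPath ∧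
    ((internals p).map c).Nodup ∧ ∀ x ∈ internals p, c x < k} with hSR
  set SS := {k | ∃ c : V → ℕ, ∀ u v : V, ∃ p : G.Walk u v, p.IsPath ∧
    p.length = G.dist u v ∧ ((internals p).map c).Nodup ∧ ∀ x ∈ internals p, c x < k} with hSS
  have hrvc : rvc G = sInf SR := rfl
  have hsrvc : srvc G = sInf SS := rfl
  have hsub : SS ⊆ SR := by
    rintro k ⟨c, hc⟩
    exact ⟨c, fun u v => by obtain ⟨p, h1, _, h3, h4⟩ := hc u v; exact ⟨p, h1, h3, h4⟩⟩
  constructor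
  · intro h
    rw [hrvc] at h
    have hne : SR.Nonempty := by
      by_contra hne
      rw [Set.not_nonempty_iff_eq_empty] at hne
      rw [hne, Nat.sInf_empty] at h
      omega
    have h2 : (2 : ℕ) ∈ SR := h ▸ Nat.sInf_mem hne
    have h2' : (2 : ℕ) ∈ SS := two_transfer hconn h2
    have hle : sInf SS ≤ 2 := Nat.sInf_le h2'
    have hmem : sInf SS ∈ SS := Nat.sInf_mem ⟨2, h2'⟩
    have hge : sInf SR ≤ sInf SS := Nat.sInf_le (hsub hmem)
    rw [hsrvc]
    omega
  · intro h
    rw [hsrvc] at h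
    have hne : SS.Nonempty := by
      by_contra hne
      rw [Set.not_nonempty_iff_eq_empty] at hne
      rw [hne, Nat.sInf_empty] at h
      omega
    have h2 : (2 : ℕ) ∈ SS := h ▸ Nat.sInf_mem hne
    have hle : sInf SR ≤ 2 := Nat.sInf_le (hsub h2)
    have hge : 2 ≤ sInf SR := by
      apply le_csInf ⟨2, hsub h2⟩
      intro k hk
      by_contra hlt
      push_neg at hlt
      have hk1 : k ≤ 1 := by omega
      have hks : k ∈ SS := small_transfer hconn hk1 hk
      have := Nat.sInf_le hks
      omega
    rw [hrvc]
    omega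

end RainbowConn
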